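/- arXiv:1612.05127 — 3 statements merged into one kernel-verified Lean document; each statement's English description precedes it below -/
import Mathlib

section
/- Let (Sᵢ)_{i∈I} be a family of right LCM monoids and S = ⊕_{i∈I} Sᵢ. If S has the accurate refinement property (property (AR)), then each Sᵢ has property (AR). -/
/-! Embed `S i` into the direct sum by `single i`: the image of a foundation set of `S i` is a
foundation set, so it has an accurate refinement `F'`. Since `F'` is finite, some `x` in the direct
sum is *stable*: the set of elements of `F'` having a common right multiple with `x` in every
coordinate except `i` does not shrink when `x` is replaced by a right multiple. Any two such
partners of `x` then have a common right multiple away from `i`, so accuracy of `F'` makes their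
`i`-th coordinates distinct and orthogonal. Covering `x` with its `i`-th coordinate replaced by an
arbitrary `s` shows that these coordinates form a foundation set of `S i`, and they refine the
given one because `F'` does. -/

section RightLCMBasics
variable (S : Type*) [Monoid S]

/-- The principal right ideal `sS`. -/
def pIdeal {S : Type*} [Monoid S] (s : S) : Set S := Set.range (fun r => s * r)

/-- `s ⊥ t` : the principal right ideals are disjoint. -/
def Orth {S : Type*} [Monoid S] (s t : S) : Prop := pIdeal s ∩ pIdeal t = ∅

/-- Left cancellativity. -/
def LeftCancellative : Prop := ∀ a b c : S, a * b = a * c → b = c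

/-- Right LCM property: intersections of principal right ideals are empty or principal. -/
def IsRightLCM : Prop :=
  ∀ s t : S, pIdeal s ∩ pIdeal t = ∅ ∨ ∃ r : S, pIdeal s ∩ pIdeal t = pIdeal r

/-- The core subsemigroup `S_c`. -/
def core : Set S := {a | ∀ s : S, ¬ Orth a s}

/-- The core relation `s ∼ t` : `sa = tb` for some core elements `a, b`. -/
def coreRel {S : Type*} [Monoid S] (s t : S) : Prop :=
  ∃ a ∈ core S, ∃ b ∈ core S, s * a = t * b

/-- A (finite) foundation set. -/
def IsFoundationSet {S : Type*} [Monoid S] (F : Set S) : Prop :=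
  F.Finite ∧ ∀ s : S, ∃ f ∈ F, ¬ Orth f s

/-- Accuracy: distinct elements are mutually orthogonal. -/
def Accurate {S : Type*} [Monoid S] (F : Set S) : Prop :=
  ∀ f ∈ F, ∀ g ∈ F, f ≠ g → Orth f g

/-- Property (AR): every foundation set admits an accurate refinement. -/
def HasAR : Prop :=
  ∀ F : Set S, IsFoundationSet F →
    ∃ F' : Set S, IsFoundationSet F' ∧ Accurate F' ∧
      F' ⊆ {x | ∃ f ∈ F, ∃ r : S, x = f * r}

end RightLCMBasics

/-- The direct sum (restricted product) of a family of monoids, as the submonoid of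
finitely supported elements of the full product. -/
def finSupp {I : Type*} (S : I → Type*) [∀ i, Monoid (S i)] : Submonoid (∀ i, S i) where
  carrier := {f | {i | f i ≠ 1}.Finite}
  one_mem' := by simp
  mul_mem' := by
    intro a b ha hb
    refine (ha.union hb).subset ?_
    intro i hi
    by_contra h
    simp only [Set.mem_union, Set.mem_setOf_eq, not_or, not_not] at h
    exact hi (by simp [Pi.mul_apply, h.1, h.2])


theorem not_orth_iff {M : Type*} [Monoid M] {s t : M} :
    ¬ Orth s t ↔ ∃ c d, s * c = t * d := by
  rw [Orth, ← Ne, ← Set.nonempty_iff_ne_empty]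
  constructor
  · rintro ⟨z, ⟨c, rfl⟩, ⟨d, hd⟩⟩
    exact ⟨c, d, hd.symm⟩
  · rintro ⟨c, d, h⟩
    exact ⟨s * c, ⟨c, rfl⟩, ⟨d, h.symm⟩⟩

theorem exists_stable_mul {M α : Type*} [Monoid M] {V : M → Set α}
    (hV : ∀ x q, V (x * q) ⊆ V x) {x : M} (hx : (V x).Finite) :
    ∃ q, ∀ q', V (x * q * q') = V (x * q) := by
  set q := Function.argmin fun q => (V (x * q)).ncard
  refine ⟨q, fun q' => Set.eq_of_subset_of_ncard_le (hV _ q') ?_ (hx.subset (hV x q))⟩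
  rw [mul_assoc]
  exact Function.argmin_le (fun q => (V (x * q)).ncard) (q * q')

namespace finSupp

variable {I : Type*} {S : I → Type*} [∀ i, Monoid (S i)]

section Update

variable [DecidableEq I]

theorem update_mem {x : ∀ i, S i} (hx : x ∈ finSupp S) (i : I) (a : S i) :
    Function.update x i a ∈ finSupp S := by
  refine (Set.Finite.insert i hx).subset fun j hj => ?_
  rcases eq_or_ne j i with rfl | hji
  · exact Set.mem_insert _ _
  · exact Set.mem_insert_of_mem _ (by simpa [hji] using hj)

def update (x : finSupp S) (i : I) (a : S i) : finSupp S :=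
  ⟨Function.update x i a, update_mem x.2 i a⟩

@[simp]
theorem coe_update (x : finSupp S) (i : I) (a : S i) :
    (update x i a : ∀ i, S i) = Function.update x i a := rfl

def single (i : I) (a : S i) : finSupp S := update 1 i a

@[simp]
theorem coe_single (i : I) (a : S i) :
    (single i a : ∀ i, S i) = Function.update (1 : ∀ i, S i) i a := rfl

end Update

def CompatibleOff (i : I) (v w : finSupp S) : Prop :=
  ∃ c d : finSupp S, ∀ j ≠ i, v.1 j * c.1 j = w.1 j * d.1 j

theorem CompatibleOff.of_mul_right {i : I} {w x q : finSupp S}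
    (h : CompatibleOff i w (x * q)) : CompatibleOff i w x := by
  obtain ⟨c, d, h⟩ := h
  exact ⟨c, q * d, fun j hj => by simpa [mul_assoc] using h j hj⟩

theorem CompatibleOff.of_update_right [DecidableEq I] {i : I} {w x : finSupp S} {a : S i}
    (h : CompatibleOff i w (update x i a)) : CompatibleOff i w x := by
  obtain ⟨c, d, h⟩ := h
  exact ⟨c, d, fun j hj => by simpa [hj] using h j hj⟩

theorem not_orth_iff_not_orth_apply_and_compatibleOff [DecidableEq I] (i : I)
    {v w : finSupp S} : ¬ Orth v w ↔ ¬ Orth (v.1 i) (w.1 i) ∧ CompatibleOff i v w := by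
  simp only [not_orth_iff]
  constructor
  · rintro ⟨c, d, h⟩
    have happly : ∀ j, v.1 j * c.1 j = w.1 j * d.1 j :=
      fun j => congrFun (congrArg Subtype.val h) j
    exact ⟨⟨c.1 i, d.1 i, happly i⟩, c, d, fun j _ => happly j⟩
  · rintro ⟨⟨a, b, hi⟩, c, d, hoff⟩
    refine ⟨update c i a, update d i b, Subtype.ext (funext fun j => ?_)⟩
    rcases eq_or_ne j i with rfl | hj
    · simpa using hi
    · simpa [hj] using hoff j hj

def compatibleOffSet (F : Set (finSupp S)) (i : I) (x : finSupp S) : Set (finSupp S) :=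
  {w ∈ F | CompatibleOff i w x}

theorem compatibleOffSet_subset (F : Set (finSupp S)) (i : I) (x : finSupp S) :
    compatibleOffSet F i x ⊆ F :=
  Set.sep_subset _ _

theorem compatibleOffSet_mul_subset (F : Set (finSupp S)) (i : I) (x q : finSupp S) :
    compatibleOffSet F i (x * q) ⊆ compatibleOffSet F i x :=
  fun _ hw => ⟨hw.1, hw.2.of_mul_right⟩

theorem CompatibleOff.of_mem_stable {F : Set (finSupp S)} {i : I} {x : finSupp S}
    (hx : ∀ q, compatibleOffSet F i (x * q) = compatibleOffSet F i x) {w w' : finSupp S}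
    (hw : w ∈ compatibleOffSet F i x) (hw' : w' ∈ compatibleOffSet F i x) :
    CompatibleOff i w w' := by
  obtain ⟨c, d, hcd⟩ := hw.2
  rw [← hx d] at hw'
  obtain ⟨c', d', hcd'⟩ := hw'.2
  refine ⟨c * d', c', fun j hj => ?_⟩
  calc w.1 j * (c * d').1 j = x.1 j * d.1 j * d'.1 j := by simp [← hcd j hj, mul_assoc]
    _ = w'.1 j * c'.1 j := by simpa using (hcd' j hj).symm

theorem isFoundationSet_image_single [DecidableEq I] (i : I) {F : Set (S i)}
    (hF : IsFoundationSet F) : IsFoundationSet (single i '' F) := by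
  refine ⟨hF.1.image _, fun x => ?_⟩
  obtain ⟨f, hf, hfx⟩ := hF.2 (x.1 i)
  refine ⟨single i f, Set.mem_image_of_mem _ hf,
    (not_orth_iff_not_orth_apply_and_compatibleOff i).2 ⟨by simpa using hfx, x, 1, ?_⟩⟩
  intro j hj
  simp [hj]

theorem exists_accurate_isFoundationSet_subset_image_apply [DecidableEq I]
    {F : Set (finSupp S)} (hF : IsFoundationSet F) (hacc : Accurate F) (i : I) :
    ∃ G ⊆ (fun w : finSupp S => w.1 i) '' F, IsFoundationSet G ∧ Accurate G := by
  obtain ⟨q, hq⟩ := exists_stable_mul (compatibleOffSet_mul_subset F i) (x := 1)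
    (hF.1.subset (compatibleOffSet_subset F i 1))
  simp only [one_mul] at hq
  refine ⟨(fun w : finSupp S => w.1 i) '' compatibleOffSet F i q,
    Set.image_mono (compatibleOffSet_subset F i q),
    ⟨(hF.1.subset (compatibleOffSet_subset F i q)).image _, fun s => ?_⟩, ?_⟩
  · obtain ⟨w, hw, hws⟩ := hF.2 (update q i s)
    rw [not_orth_iff_not_orth_apply_and_compatibleOff i] at hws
    exact ⟨w.1 i, ⟨w, ⟨hw, hws.2.of_update_right⟩, rfl⟩, by simpa using hws.1⟩
  · rintro _ ⟨w, hw, rfl⟩ _ ⟨w', hw', rfl⟩ hne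
    by_contra hnorth
    have hww' : w ≠ w' := by rintro rfl; exact hne rfl
    exact (not_orth_iff_not_orth_apply_and_compatibleOff i).2
      ⟨hnorth, CompatibleOff.of_mem_stable hq hw hw'⟩ (hacc w hw.1 w' hw'.1 hww')

end finSupp

theorem AR_of_direct_sum_general {I : Type*} (S : I → Type*) [∀ i, Monoid (S i)]
    (hAR : HasAR ↥(finSupp S)) : ∀ i : I, HasAR (S i) := by
  classical
  intro i F hF
  obtain ⟨F', hF', hacc, hrefine⟩ := hAR _ (finSupp.isFoundationSet_image_single i hF)
  obtain ⟨G, hGF', hG, hGacc⟩ :=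
    finSupp.exists_accurate_isFoundationSet_subset_image_apply hF' hacc i
  refine ⟨G, hG, hGacc, fun g hg => ?_⟩
  obtain ⟨w, hw, rfl⟩ := hGF' hg
  obtain ⟨_, ⟨f, hf, rfl⟩, r, rfl⟩ := hrefine hw
  exact ⟨f, hf, r.1 i, by simp⟩

/-- Proposition 4.1: if a direct sum of right LCM monoids has property (AR), then so
does each summand. -/
theorem AR_of_direct_sum {I : Type*} (S : I → Type*) [∀ i, Monoid (S i)]
    (hlc : ∀ i, LeftCancellative (S i)) (hlcm : ∀ i, IsRightLCM (S i))
    (hAR : HasAR ↥(finSupp S)) : ∀ i : I, HasAR (S i) :=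
  AR_of_direct_sum_general S hAR
end

section
/- Let N be a generalised scale on the free monoid F⁺ₘ (2 ≤ m < ∞) with generators a₁,…,aₘ. Then N(aᵢ) = m for every generator aᵢ. -/
/-- A minimal complete set (transversal) of representatives for `N⁻¹(n)/∼`. -/
def IsTransversal {S : Type*} [Monoid S] (N : S →* ℕ) (n : ℕ) (T : Set S) : Prop :=
  (∀ t ∈ T, N t = n) ∧ (∀ s : S, N s = n → ∃ t ∈ T, coreRel s t) ∧
  (∀ t ∈ T, ∀ t' ∈ T, coreRel t t' → t = t')

/-- A generalised scale: a nontrivial homomorphism into `(ℕ₊, ·)` such that `N⁻¹(n)/∼`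
has exactly `n` elements and every minimal complete set of representatives of
`N⁻¹(n)/∼` is an accurate foundation set, for every `n` in the image of `N`. -/
def IsGenScale {S : Type*} [Monoid S] (N : S →* ℕ) : Prop :=
  (∀ s : S, N s ≠ 0) ∧ (∃ s : S, N s ≠ 1) ∧
  ∀ n ∈ Set.range N,
    (∃ T : Set S, IsTransversal N n T ∧ T.Finite ∧ T.ncard = n) ∧
    (∀ T : Set S, IsTransversal N n T → Accurate T ∧ IsFoundationSet T)

/-!
The free monoid on at least two letters has trivial core, so the only transversal of
`N⁻¹(n)/∼` is the fibre `N⁻¹(n)` itself: it has `n` elements and is an accurate foundation set.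
Accuracy of `N⁻¹(1) ∋ 1` forces `N(aⱼ) ≥ 2` for every generator. If `n` is the least value
`N(aⱼ)`, every word of length at least two has `N`-value at least `n² > n`, so `N⁻¹(n)`
consists of generators; being a foundation set, and distinct generators being orthogonal,
it contains them all. Hence `N⁻¹(n)` is the set of the `m` generators, and `n = m`.
-/

section Monoid
variable {S : Type*} [Monoid S]

theorem not_orth_one_left (s : S) : ¬ Orth 1 s := by
  intro h
  have hs : s ∈ pIdeal (1 : S) ∩ pIdeal s := ⟨⟨s, one_mul s⟩, ⟨1, mul_one s⟩⟩
  rw [Orth] at h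
  simp [h] at hs

theorem one_mem_core : (1 : S) ∈ core S := not_orth_one_left

theorem coreRel_refl (s : S) : coreRel s s := ⟨1, one_mem_core, 1, one_mem_core, rfl⟩

theorem eq_of_coreRel (hcore : core S ⊆ {1}) {s t : S} (h : coreRel s t) : s = t := by
  obtain ⟨a, ha, b, hb, hab⟩ := h
  rwa [hcore ha, hcore hb, mul_one, mul_one] at hab

theorem isTransversal_iff_eq_preimage (hcore : core S ⊆ {1}) {N : S →* ℕ} {n : ℕ}
    {T : Set S} : IsTransversal N n T ↔ T = N ⁻¹' {n} := by
  constructor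
  · rintro ⟨hval, hcomplete, -⟩
    ext s
    refine ⟨hval s, fun hs => ?_⟩
    obtain ⟨t, ht, hst⟩ := hcomplete s hs
    rwa [eq_of_coreRel hcore hst]
  · rintro rfl
    exact ⟨fun _ => id, fun s hs => ⟨s, hs, coreRel_refl s⟩,
      fun _ _ _ _ => eq_of_coreRel hcore⟩

namespace IsGenScale
variable {N : S →* ℕ} {n : ℕ}

theorem ncard_preimage (hN : IsGenScale N) (hcore : core S ⊆ {1}) (hn : n ∈ Set.range N) :
    (N ⁻¹' {n}).ncard = n := by
  obtain ⟨T, hT, -, hcard⟩ := (hN.2.2 n hn).1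
  rwa [← (isTransversal_iff_eq_preimage hcore).1 hT]

theorem accurate_preimage (hN : IsGenScale N) (hcore : core S ⊆ {1}) (hn : n ∈ Set.range N) :
    Accurate (N ⁻¹' {n}) :=
  ((hN.2.2 n hn).2 _ ((isTransversal_iff_eq_preimage hcore).2 rfl)).1

theorem isFoundationSet_preimage (hN : IsGenScale N) (hcore : core S ⊆ {1})
    (hn : n ∈ Set.range N) : IsFoundationSet (N ⁻¹' {n}) :=
  ((hN.2.2 n hn).2 _ ((isTransversal_iff_eq_preimage hcore).2 rfl)).2

theorem preimage_one (hN : IsGenScale N) (hcore : core S ⊆ {1}) : N ⁻¹' {1} = {1} := by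
  refine Set.eq_singleton_iff_unique_mem.2 ⟨map_one N, fun s hs => ?_⟩
  by_contra hne
  exact not_orth_one_left s
    (hN.accurate_preimage hcore ⟨1, map_one N⟩ 1 (map_one N) s hs (Ne.symm hne))

end IsGenScale

end Monoid

namespace FreeMonoid
variable {α : Type*}

theorem orth_of_mul_of_mul {i j : α} (hij : i ≠ j) (s t : FreeMonoid α) :
    Orth (of i * s) (of j * t) := by
  rw [Orth, Set.eq_empty_iff_forall_notMem]
  rintro x ⟨⟨r, hr⟩, ⟨r', hr'⟩⟩
  have h := congrArg toList (hr.trans hr'.symm)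
  simp only [toList_mul, toList_of, List.cons_append, List.cons.injEq] at h
  exact hij h.1

theorem orth_of_of {i j : α} (hij : i ≠ j) : Orth (of i) (of j) := by
  simpa using orth_of_mul_of_mul hij 1 1

theorem core_subset_one [Nontrivial α] : core (FreeMonoid α) ⊆ {1} := by
  intro c hc
  cases c with
  | one => rfl
  | of_mul i s =>
    obtain ⟨j, hji⟩ := exists_ne i
    exact absurd (orth_of_mul_of_mul hji.symm s 1) (hc _)

theorem range_of_subset_of_isFoundationSet {F : Set (FreeMonoid α)} (hF : IsFoundationSet F)
    (hsub : F ⊆ Set.range of) : Set.range of ⊆ F := by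
  rintro _ ⟨k, rfl⟩
  obtain ⟨f, hf, hfk⟩ := hF.2 (of k)
  obtain ⟨j, rfl⟩ := hsub hf
  obtain rfl : j = k := by_contra fun hjk => hfk (orth_of_of hjk)
  exact hf

theorem mem_range_of_of_map_eq_min {N : FreeMonoid α →* ℕ} (hN0 : ∀ w, N w ≠ 0) {n : ℕ}
    (hn : 2 ≤ n) (hmin : ∀ a, n ≤ N (of a)) {w : FreeMonoid α} (hw : N w = n) :
    w ∈ Set.range of := by
  cases w with
  | one => rw [map_one] at hw; omega
  | of_mul a v =>
    cases v with
    | one => exact ⟨a, (mul_one _).symm⟩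
    | of_mul b u =>
      have hu : 1 ≤ N u := Nat.one_le_iff_ne_zero.2 (hN0 u)
      have : n * n ≤ n := calc
        n * n ≤ N (of a) * (N (of b) * N u) :=
          Nat.mul_le_mul (hmin a) (le_mul_of_le_of_one_le (hmin b) hu)
        _ = n := by rw [← hw, map_mul, map_mul]
      nlinarith

end FreeMonoid

/-- Any generalised scale on the free monoid on `2 ≤ m < ∞` generators sends each
generator to `m`. -/
theorem gen_scale_on_generators (m : ℕ) (hm : 2 ≤ m)
    (N : FreeMonoid (Fin m) →* ℕ) (hN : IsGenScale N) :
    ∀ i : Fin m, N (FreeMonoid.of i) = m := by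
  have := Fin.nontrivial_iff_two_le.2 hm
  have hcore := FreeMonoid.core_subset_one (α := Fin m)
  have hgen : ∀ j, 2 ≤ N (FreeMonoid.of j) := fun j => by
    have hne1 : N (FreeMonoid.of j) ≠ 1 := fun h =>
      FreeMonoid.of_ne_one j ((hN.preimage_one hcore).subset h)
    have := hN.1 (FreeMonoid.of j)
    omega
  obtain ⟨j₀, hj₀⟩ := Finite.exists_min fun j => N (FreeMonoid.of j)
  set n := N (FreeMonoid.of j₀)
  have hsub : N ⁻¹' {n} ⊆ Set.range FreeMonoid.of := fun w hw =>
    FreeMonoid.mem_range_of_of_map_eq_min hN.1 (hgen j₀) hj₀ hw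
  have hfibre : N ⁻¹' {n} = Set.range FreeMonoid.of := hsub.antisymm
    (FreeMonoid.range_of_subset_of_isFoundationSet
      (hN.isFoundationSet_preimage hcore ⟨_, rfl⟩) hsub)
  have hnm : n = m := calc
    n = (N ⁻¹' {n}).ncard := (hN.ncard_preimage hcore ⟨_, rfl⟩).symm
    _ = m := by rw [hfibre, Set.ncard_range_of_injective FreeMonoid.of_injective, Nat.card_fin]
  intro i
  exact (hfibre.symm.subset ⟨i, rfl⟩ : N (FreeMonoid.of i) = n).trans hnm
end

section
/- Let Γ = (V,E) be an infinite coconnected graph with at least two vertices and (S_v)_{v∈V} a family of nontrivial right LCM monoids. Then every foundation set for the graph product S_Γ contains an invertible element. Consequently S_Γ has property (AR). -/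
/-- The congruence on the free product implementing the graph product relations. -/
def graphProductCon {V : Type*} (G : SimpleGraph V) (S : V → Type*) [∀ v, Monoid (S v)] :
    Con (Monoid.CoprodI S) :=
  conGen (fun x y => ∃ (v w : V) (s : S v) (t : S w), G.Adj v w ∧
    x = Monoid.CoprodI.of s * Monoid.CoprodI.of t ∧
    y = Monoid.CoprodI.of t * Monoid.CoprodI.of s)

/-- The graph product of a family of monoids over a graph. -/
def GraphProduct {V : Type*} (G : SimpleGraph V) (S : V → Type*) [∀ v, Monoid (S v)] :=
  (graphProductCon G S).Quotient

instance {V : Type*} (G : SimpleGraph V) (S : V → Type*) [∀ v, Monoid (S v)] :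
    Monoid (GraphProduct G S) :=
  inferInstanceAs (Monoid (graphProductCon G S).Quotient)

/-- The quotient map from the free product onto the graph product. -/
def GraphProduct.mk {V : Type*} (G : SimpleGraph V) (S : V → Type*) [∀ v, Monoid (S v)] :
    Monoid.CoprodI S →* GraphProduct G S := Con.mk' _

/-!
Let `f = P c r` be a non-unit of the graph product with `c ∈ S d` a non-unit letter. Along a
path `u = v₀, …, vₖ, d` in `Gᶜ`, let the graph product act on `∏ v, S v`: a letter `s ∈ S vᵢ`
replaces `σ vᵢ` by `s * σ vᵢ` provided `σ vᵢ₊₁ ≠ 1` (unconditionally if `i = k`), a non-unit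
letter at `d` resets the state to `1`, and all other letters act trivially. This respects the
commutation relations because consecutive path vertices are not adjacent in `G`. If `u` does not
occur in `P`, then `f` sends every state to one with `u`-coordinate `1`, whereas `w a₀ ⋯ aₖ t w'`,
with nontrivial `aᵢ ∈ S vᵢ`, a non-unit `t ∈ S d` and `w` free of `u` and `d`, sends every state
to one with `u`-coordinate `a₀ ≠ 1`. Hence the two are orthogonal.

Since `V` is infinite and `Gᶜ` connected, for a finite set `F` of non-units such segments with
fresh starting vertices can be strung together for all anchors at once, giving one element
orthogonal to all of `F`. So every foundation set contains a unit, and that unit alone is an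
accurate foundation set refining it.
-/

theorem exists_ne_one_and_not_isUnit {M : Type*} [Monoid M] [Nontrivial M] :
    ∃ a : M, a ≠ 1 ∧ ((∃ s : M, ¬IsUnit s) → ¬IsUnit a) := by
  by_cases h : ∃ s : M, ¬IsUnit s
  · obtain ⟨s, hs⟩ := h
    exact ⟨s, fun h1 => hs (h1 ▸ isUnit_one), fun _ => hs⟩
  · obtain ⟨a, ha⟩ := exists_ne (1 : M)
    exact ⟨a, ha, fun h' => absurd h' h⟩

theorem orth_of_forall_mem_of_forall_notMem {M X : Type*} [Monoid M] [Nonempty X]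
    (φ : M →* Function.End X) {f g : M} {Q : Set X} (hf : ∀ x, φ f x ∈ Q)
    (hg : ∀ x, φ g x ∉ Q) : Orth f g := by
  refine Set.eq_empty_iff_forall_notMem.2 fun y ⟨⟨a, ha⟩, ⟨b, hb⟩⟩ => ?_
  obtain ⟨x⟩ := ‹Nonempty X›
  have hfg : φ f (φ a x) = φ g (φ b x) := by
    have h : φ (f * a) x = φ (g * b) x := by simp only at ha hb; rw [ha, hb]
    rwa [map_mul, map_mul] at h
  exact hg (φ b x) (hfg ▸ hf (φ a x))

theorem isFoundationSet_singleton_of_isUnit {M : Type*} [Monoid M] {f : M} (hf : IsUnit f) :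
    IsFoundationSet ({f} : Set M) := by
  refine ⟨Set.finite_singleton f, fun s => ⟨f, rfl, fun h => ?_⟩⟩
  have hs : s ∈ pIdeal f ∩ pIdeal s :=
    ⟨⟨↑hf.unit⁻¹ * s, by simp [← mul_assoc]⟩, ⟨1, mul_one s⟩⟩
  exact Set.eq_empty_iff_forall_notMem.1 h s hs

theorem hasAR_of_forall_exists_isUnit {M : Type*} [Monoid M]
    (h : ∀ F : Set M, IsFoundationSet F → ∃ f ∈ F, IsUnit f) : HasAR M := by
  intro F hF
  obtain ⟨f, hfF, hf⟩ := h F hF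
  refine ⟨{f}, isFoundationSet_singleton_of_isUnit hf, ?_, ?_⟩
  · rintro g rfl g' rfl hne
    exact absurd rfl hne
  · rintro g rfl
    exact ⟨g, hfF, 1, (mul_one g).symm⟩

namespace List

variable {α : Type*} [DecidableEq α]

def nextAfter : List α → α → Option α
  | a :: b :: l, v => if v = a then some b else nextAfter (b :: l) v
  | _, _ => none

theorem IsChain.rel_of_nextAfter_eq_some {R : α → α → Prop} {L : List α} (hL : L.IsChain R)
    {v w : α} (h : L.nextAfter v = some w) : R v w := by
  fun_induction nextAfter L v with
  | case1 a b l => cases h; exact (isChain_cons_cons.1 hL).1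
  | case2 a b l v _ ih => exact ih (isChain_cons_cons.1 hL).2 h
  | case3 => cases h

theorem nextAfter_cons_of_ne {a v : α} (L : List α) (h : v ≠ a) :
    (a :: L).nextAfter v = L.nextAfter v := by
  cases L <;> simp [nextAfter, h]

theorem isChain_nextAfter {L : List α} (hL : L.Nodup) :
    L.IsChain fun v w => L.nextAfter v = some w := by
  induction L with
  | nil => exact .nil
  | cons a L ih =>
    cases L with
    | nil => exact .singleton a
    | cons b l =>
      refine isChain_cons_cons.2 ⟨by simp [nextAfter], ?_⟩
      refine (ih hL.of_cons).imp_of_mem_imp fun v w hv _ h => ?_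
      rwa [nextAfter_cons_of_ne _ (ne_of_mem_of_not_mem hv (nodup_cons.1 hL).1)]

end List

namespace SimpleGraph

variable {V : Type*} {G : SimpleGraph V}

theorem Preconnected.exists_path_from_notMem [DecidableEq V] [Infinite V] (hG : G.Preconnected)
    (A : Finset V) (d : V) :
    ∃ u ∉ A, ∃ p : List V, (u :: p ++ [d]).Nodup ∧ (u :: p ++ [d]).IsChain G.Adj := by
  obtain ⟨u, hu⟩ := Infinite.exists_notMem_finset (insert d A)
  obtain ⟨q, hq⟩ := (hG u d).some.toPath
  cases q with
  | nil => exact absurd (Finset.mem_insert_self _ A) hu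
  | cons h q =>
    refine ⟨u, fun huA => hu (Finset.mem_insert_of_mem huA), q.support.dropLast, ?_, ?_⟩
    · rw [List.cons_append, Walk.dropLast_support_concat, ← Walk.support_cons h q]
      exact hq.support_nodup
    · rw [List.cons_append, Walk.dropLast_support_concat, ← Walk.support_cons h q]
      exact Walk.isChain_adj_support _

variable (G) in
def FreshPathSegment (W : Finset V) (zs : List V) (d : V) : Prop :=
  ∃ pre u p post, zs = pre ++ u :: p ++ d :: post ∧ u ∉ W ∧ u ∉ pre ∧ d ∉ pre ∧
    (u :: p ++ [d]).Nodup ∧ (u :: p ++ [d]).IsChain G.Adj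

theorem FreshPathSegment.append_left [DecidableEq V] {W : Finset V} {zs : List V} {d : V}
    (q : List V) (h : G.FreshPathSegment (W ∪ q.toFinset) zs d) (hd : d ∉ q) :
    G.FreshPathSegment W (q ++ zs) d := by
  obtain ⟨pre, u, p, post, rfl, hu, hupre, hdpre, hnd, hch⟩ := h
  refine ⟨q ++ pre, u, p, post, by simp, fun h => hu (Finset.mem_union_left _ h), ?_, ?_, hnd, hch⟩
  · simp only [List.mem_append, not_or]
    exact ⟨fun h => hu (Finset.mem_union_right _ (List.mem_toFinset.2 h)), hupre⟩
  · simp only [List.mem_append, not_or]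
    exact ⟨hd, hdpre⟩

theorem freshPathSegment_of_mem {W : Finset V} {u d₀ d : V} {p : List V} (hu : u ∉ W)
    (hnd : (u :: p ++ [d₀]).Nodup) (hch : (u :: p ++ [d₀]).IsChain G.Adj)
    (hd : d ∈ u :: p ++ [d₀]) (hdW : d ∈ W) (zs : List V) :
    G.FreshPathSegment W (u :: p ++ [d₀] ++ zs) d := by
  obtain ⟨_ | ⟨x, p₁⟩, q₂, hq⟩ := List.append_of_mem hd
  · obtain rfl : u = d := List.cons_eq_cons.1 hq |>.1
    exact absurd hdW hu
  obtain ⟨rfl, -⟩ := List.cons_eq_cons.1 hq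
  have hpre : u :: p₁ ++ [d] <+: u :: p ++ [d₀] := by
    rw [hq]
    exact ⟨q₂, by simp⟩
  exact ⟨[], u, p₁, q₂ ++ zs, by rw [hq]; simp, hu, List.not_mem_nil, List.not_mem_nil,
    hnd.sublist hpre.sublist, hch.prefix hpre⟩

theorem Preconnected.exists_freshPathSegment [DecidableEq V] [Infinite V] (hG : G.Preconnected)
    (D W : Finset V) (hDW : D ⊆ W) : ∃ zs, ∀ d ∈ D, G.FreshPathSegment W zs d := by
  induction D using Finset.induction_on generalizing W with
  | empty => exact ⟨[], by simp⟩
  | insert d₀ D hd₀ ih =>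
    obtain ⟨u, hu, p, hnd, hch⟩ := hG.exists_path_from_notMem W d₀
    obtain ⟨zs, hzs⟩ := ih (W ∪ (u :: p ++ [d₀]).toFinset)
      fun d hd => Finset.mem_union_left _ (hDW (Finset.mem_insert_of_mem hd))
    refine ⟨u :: p ++ [d₀] ++ zs, fun d hd => ?_⟩
    by_cases hdq : d ∈ u :: p ++ [d₀]
    · -- vertices of `D` already on the new path are served by a prefix of it
      exact freshPathSegment_of_mem hu hnd hch hdq (hDW hd) zs
    · obtain rfl | hdD := Finset.mem_insert.1 hd
      · simp at hdq
      · exact (hzs d hdD).append_left _ hdq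

end SimpleGraph

namespace GraphProduct

variable {V : Type*} {G : SimpleGraph V} {S : V → Type*} [∀ v, Monoid (S v)]

def of {v : V} : S v →* GraphProduct G S := (mk G S).comp Monoid.CoprodI.of

def lift {M : Type*} [Monoid M] (φ : ∀ v, S v →* M)
    (hφ : ∀ v w, G.Adj v w → ∀ (s : S v) (t : S w), Commute (φ v s) (φ w t)) :
    GraphProduct G S →* M :=
  (graphProductCon G S).lift (Monoid.CoprodI.lift φ) <| Con.conGen_le.2 <| by
    rintro _ _ ⟨v, w, s, t, hadj, rfl, rfl⟩
    simpa [Con.ker_rel] using (hφ v w hadj s t).eq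

@[simp]
theorem lift_of {M : Type*} [Monoid M] (φ : ∀ v, S v →* M)
    (hφ : ∀ v w, G.Adj v w → ∀ (s : S v) (t : S w), Commute (φ v s) (φ w t)) {v : V} (s : S v) :
    lift φ hφ (of s) = φ v s :=
  Monoid.CoprodI.lift_of φ s

variable (G) in
def wordProd (L : List (Σ v, S v)) : GraphProduct G S := (L.map fun l => of l.2).prod

@[simp]
theorem wordProd_nil : wordProd G ([] : List (Σ v, S v)) = 1 := rfl

@[simp]
theorem wordProd_cons (l : Σ v, S v) (L : List (Σ v, S v)) :
    wordProd G (l :: L) = of l.2 * wordProd G L := by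
  simp [wordProd]

@[simp]
theorem wordProd_append (L K : List (Σ v, S v)) :
    wordProd G (L ++ K) = wordProd G L * wordProd G K := by
  simp [wordProd]

theorem exists_wordProd_eq (g : GraphProduct G S) : ∃ L, wordProd G L = g := by
  obtain ⟨x, rfl⟩ := Con.mk'_surjective (c := graphProductCon G S) g
  induction x using Monoid.CoprodI.induction_left with
  | one => exact ⟨[], (map_one (Con.mk' _)).symm⟩
  | mul s x ih =>
    obtain ⟨L, hL⟩ := ih
    exact ⟨⟨_, s⟩ :: L, by rw [wordProd_cons, hL, map_mul]; rfl⟩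

theorem exists_eq_wordProd_mul_of_not_isUnit {g : GraphProduct G S} (hg : ¬IsUnit g) :
    ∃ (P : List (Σ v, S v)) (d : V) (c : S d) (r : GraphProduct G S),
      ¬IsUnit c ∧ g = wordProd G P * of c * r := by
  obtain ⟨L, rfl⟩ := exists_wordProd_eq g
  induction L with
  | nil => exact absurd isUnit_one hg
  | cons l L ih =>
    rw [wordProd_cons] at hg
    by_cases hl : IsUnit l.2
    · obtain ⟨P, d, c, r, hc, hL⟩ := ih fun hL => hg ((hl.map of).mul hL)
      exact ⟨l :: P, d, c, r, hc, by rw [wordProd_cons, wordProd_cons, hL]; simp only [mul_assoc]⟩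
    · exact ⟨[], l.1, l.2, wordProd G L, hl, by rw [wordProd_cons, wordProd_nil, one_mul]⟩

theorem mapsTo_wordProd {X : Type*} (φ : GraphProduct G S →* Function.End X) {Q : Set X}
    {L : List (Σ v, S v)} (hL : ∀ l ∈ L, Set.MapsTo (φ (of l.2)) Q Q) :
    Set.MapsTo (φ (wordProd G L)) Q Q := by
  induction L with
  | nil => rw [wordProd_nil, map_one]; exact Set.mapsTo_id Q
  | cons l L ih =>
    rw [wordProd_cons, map_mul]
    exact (hL l List.mem_cons_self).comp (ih fun l hl => hL l (List.mem_cons_of_mem _ hl))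

end GraphProduct

/-- A path in `Gᶜ` ending at `anchor`, recorded by its successor map `next`. -/
structure Relay {V : Type*} (G : SimpleGraph V) where
  anchor : V
  next : V → Option V
  compl_adj_of_next {v w : V} : next v = some w → Gᶜ.Adj v w

open scoped Classical in
noncomputable def Relay.ofPath {V : Type*} {G : SimpleGraph V} (L : List V)
    (hL : L.IsChain Gᶜ.Adj) (d : V) : Relay G where
  anchor := d
  next := L.nextAfter
  compl_adj_of_next := hL.rel_of_nextAfter_eq_some

namespace Relay

open Function GraphProduct
open scoped Classical

variable {V : Type*} {G : SimpleGraph V} {S : V → Type*} [∀ v, Monoid (S v)] (R : Relay G)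

def Live (σ : ∀ v, S v) (v : V) : Prop :=
  ∃ w, R.next v = some w ∧ (w = R.anchor ∨ σ w ≠ 1)

noncomputable def act (v : V) (s : S v) (σ : ∀ v, S v) : ∀ v, S v :=
  if v = R.anchor then (if IsUnit s then σ else 1)
  else if R.Live σ v then update σ v (s * σ v) else σ

variable {R}

theorem live_update_iff {σ : ∀ v, S v} {v w : V} {t : S w}
    (h : ∀ x, R.next v = some x → x ≠ w) : R.Live (update σ w t) v ↔ R.Live σ v := by
  refine exists_congr fun x => and_congr_right fun hx => ?_
  rw [update_of_ne (h x hx)]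

theorem act_of_ne_anchor {v : V} (hv : v ≠ R.anchor) (s : S v) (σ : ∀ v, S v) :
    R.act v s σ = if R.Live σ v then update σ v (s * σ v) else σ :=
  if_neg hv

theorem act_anchor_of_not_isUnit {s : S R.anchor} (hs : ¬IsUnit s) (σ : ∀ v, S v) :
    R.act R.anchor s σ = 1 := by
  simp [act, hs]

theorem live_act_iff {σ : ∀ v, S v} {v w : V} (t : S w) (hw : w ≠ R.anchor)
    (h : ∀ x, R.next v = some x → x ≠ w) : R.Live (R.act w t σ) v ↔ R.Live σ v := by
  rw [act_of_ne_anchor hw]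
  split_ifs
  exacts [live_update_iff h, Iff.rfl]

theorem act_one (v : V) (σ : ∀ v, S v) : R.act v 1 σ = σ := by
  unfold act
  split_ifs <;> simp_all

theorem act_mul [IsDedekindFiniteMonoid (S R.anchor)] (v : V) (s t : S v) (σ : ∀ v, S v) :
    R.act v (s * t) σ = R.act v s (R.act v t σ) := by
  by_cases hv : v = R.anchor
  · subst hv
    simp only [act, if_true, IsUnit.mul_iff]
    split_ifs <;> simp_all
  · rw [act_of_ne_anchor hv, act_of_ne_anchor hv,
      live_act_iff t hv fun _ hx => (R.compl_adj_of_next hx).ne.symm, act_of_ne_anchor hv]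
    split_ifs <;> simp [mul_assoc]

theorem next_ne_of_adj {v w x : V} (hx : R.next v = some x) (hadj : G.Adj v w) : x ≠ w := by
  rintro rfl
  exact ((SimpleGraph.compl_adj G v x).1 (R.compl_adj_of_next hx)).2 hadj

theorem act_one_of_adj_anchor {w : V} (hw : G.Adj w R.anchor) (t : S w) :
    R.act w t 1 = 1 := by
  rw [act_of_ne_anchor hw.ne, if_neg]
  rintro ⟨x, hx, rfl | hx1⟩
  exacts [next_ne_of_adj hx hw rfl, hx1 rfl]

theorem act_apply_of_ne {v u : V} (hv : v ≠ R.anchor) (hvu : v ≠ u) (s : S v)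
    (σ : ∀ v, S v) : R.act v s σ u = σ u := by
  rw [act_of_ne_anchor hv]
  split_ifs
  exacts [update_of_ne hvu.symm _ _, rfl]

theorem act_anchor_comm {w : V} (hadj : G.Adj R.anchor w) (s : S R.anchor) (t : S w)
    (σ : ∀ v, S v) : R.act R.anchor s (R.act w t σ) = R.act w t (R.act R.anchor s σ) := by
  by_cases hs : IsUnit s
  · simp [act, hs]
  · rw [act_anchor_of_not_isUnit hs, act_anchor_of_not_isUnit hs, act_one_of_adj_anchor hadj.symm]

theorem act_comm {v w : V} (hadj : G.Adj v w) (s : S v) (t : S w) (σ : ∀ v, S v) :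
    R.act v s (R.act w t σ) = R.act w t (R.act v s σ) := by
  obtain rfl | hv := eq_or_ne v R.anchor
  · exact act_anchor_comm hadj s t σ
  obtain rfl | hw := eq_or_ne w R.anchor
  · exact (act_anchor_comm hadj.symm t s σ).symm
  rw [act_of_ne_anchor hv _ (R.act w t σ), act_of_ne_anchor hw _ (R.act v s σ),
    live_act_iff t hw fun _ hx => next_ne_of_adj hx hadj,
    live_act_iff s hv fun _ hx => next_ne_of_adj hx hadj.symm,
    act_apply_of_ne hw hadj.ne.symm, act_apply_of_ne hv hadj.ne, act_of_ne_anchor hv,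
    act_of_ne_anchor hw]
  split_ifs <;> simp [update_comm hadj.ne]

theorem act_apply_eq_one {u v : V} (hvu : v ≠ u) (s : S v) {σ : ∀ v, S v} (hσ : σ u = 1) :
    R.act v s σ u = 1 := by
  by_cases hv : v = R.anchor
  · unfold act
    split_ifs
    exacts [hσ, rfl]
  · rwa [act_apply_of_ne hv hvu]

variable (R) in
noncomputable def toEnd [IsDedekindFiniteMonoid (S R.anchor)] :
    GraphProduct G S →* Function.End (∀ v, S v) :=
  lift (fun v =>
      { toFun := R.act v
        map_one' := funext (R.act_one v)
        map_mul' := fun s t => funext (R.act_mul v s t) })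
    fun _ _ hadj s t => funext (R.act_comm hadj s t)

theorem toEnd_of_apply [IsDedekindFiniteMonoid (S R.anchor)] {v : V} (s : S v)
    (σ : ∀ v, S v) : R.toEnd (of s) σ = R.act v s σ :=
  congrArg (fun f : Function.End _ => f σ) (lift_of _ _ s)

theorem toEnd_mul_apply [IsDedekindFiniteMonoid (S R.anchor)] (g h : GraphProduct G S)
    (σ : ∀ v, S v) : R.toEnd (g * h) σ = R.toEnd g (R.toEnd h σ) := by
  rw [map_mul]
  rfl

section

variable [IsDedekindFiniteMonoid (S R.anchor)]

theorem toEnd_wordProd_path_one (a : ∀ v, S v) {p : List V} (hnd : (p ++ [R.anchor]).Nodup)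
    (hch : (p ++ [R.anchor]).IsChain fun v w => R.next v = some w) (ha : ∀ v ∈ p, a v ≠ 1) :
    (∀ x ∉ p, R.toEnd (wordProd G (p.map fun v => ⟨v, a v⟩)) 1 x = 1) ∧
      ∀ v ∈ p.head?, R.toEnd (wordProd G (p.map fun v => ⟨v, a v⟩)) 1 v = a v := by
  induction p with
  | nil => exact ⟨fun _ _ => rfl, by simp⟩
  | cons v p ih =>
    rw [List.cons_append, List.nodup_cons, List.mem_append, not_or] at hnd
    obtain ⟨⟨hvp, hva⟩, hnd⟩ := hnd
    obtain ⟨hone, hhead⟩ := ih hnd hch.tail fun x hx => ha x (List.mem_cons_of_mem _ hx)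
    set τ := R.toEnd (wordProd G (p.map fun v => ⟨v, a v⟩)) 1
    have hlive : R.Live τ v := by
      cases p with
      | nil => exact ⟨R.anchor, (List.isChain_cons_cons.1 hch).1, Or.inl rfl⟩
      | cons x q =>
        refine ⟨x, (List.isChain_cons_cons.1 hch).1, Or.inr ?_⟩
        rw [hhead x rfl]
        exact ha x (by simp)
    have hstep : R.toEnd (wordProd G ((v :: p).map fun v => ⟨v, a v⟩)) 1 =
        update τ v (a v * τ v) := by
      rw [List.map_cons, wordProd_cons]
      funext x
      rw [toEnd_mul_apply, toEnd_of_apply]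
      exact congrFun ((act_of_ne_anchor (by simpa using hva) _ τ).trans (if_pos hlive)) x
    rw [hstep]
    refine ⟨fun x hx => ?_, fun x hx => ?_⟩
    · rw [List.mem_cons, not_or] at hx
      rw [update_of_ne hx.1, hone x hx.2]
    · cases hx
      rw [update_self, hone v hvp, mul_one]

theorem toEnd_apply_eq_one {u : V} {P : List (Σ v, S v)} (hP : ∀ l ∈ P, l.1 ≠ u)
    {c : S R.anchor} (hc : ¬IsUnit c) (r : GraphProduct G S) (σ : ∀ v, S v) :
    R.toEnd (wordProd G P * of c * r) σ u = 1 := by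
  rw [toEnd_mul_apply, toEnd_mul_apply, toEnd_of_apply, act_anchor_of_not_isUnit hc]
  refine mapsTo_wordProd R.toEnd (Q := {τ : ∀ v, S v | τ u = 1}) (fun l hl τ hτ => ?_) rfl
  rw [toEnd_of_apply]
  exact act_apply_eq_one (hP l hl) l.2 hτ

theorem toEnd_wordProd_apply_of_forall_ne {u : V} {L : List (Σ v, S v)}
    (hL : ∀ l ∈ L, l.1 ≠ R.anchor ∧ l.1 ≠ u) (σ : ∀ v, S v) :
    R.toEnd (wordProd G L) σ u = σ u := by
  refine mapsTo_wordProd R.toEnd (Q := {τ | τ u = σ u}) (fun l hl τ hτ => ?_) rfl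
  change R.toEnd (of l.2) τ u = σ u
  rw [toEnd_of_apply, act_apply_of_ne (hL l hl).1 (hL l hl).2]
  exact hτ

theorem toEnd_apply_ne_one (a : ∀ v, S v) {u : V} {pre p post : List V} (hupre : u ∉ pre)
    (hpre : R.anchor ∉ pre) (hnd : (u :: p ++ [R.anchor]).Nodup)
    (hch : (u :: p ++ [R.anchor]).IsChain fun v w => R.next v = some w)
    (ha : ∀ v ∈ u :: p, a v ≠ 1) (hd : ¬IsUnit (a R.anchor)) (σ : ∀ v, S v) :
    R.toEnd (wordProd G ((pre ++ u :: p ++ R.anchor :: post).map fun v => ⟨v, a v⟩)) σ u ≠ 1 := by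
  have hpre' : ∀ l ∈ pre.map fun v => (⟨v, a v⟩ : Σ v, S v), l.1 ≠ R.anchor ∧ l.1 ≠ u := by
    simp only [List.mem_map]
    rintro _ ⟨v, hv, rfl⟩
    exact ⟨ne_of_mem_of_not_mem hv hpre, ne_of_mem_of_not_mem hv hupre⟩
  rw [List.map_append, List.map_append, List.map_cons (a := R.anchor), wordProd_append,
    wordProd_append, wordProd_cons]
  simp only [toEnd_mul_apply, toEnd_of_apply, act_anchor_of_not_isUnit hd]
  rw [toEnd_wordProd_apply_of_forall_ne hpre', (toEnd_wordProd_path_one a hnd hch ha).2 u rfl]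
  exact ha u List.mem_cons_self

end

end Relay

namespace GraphProduct

variable {V : Type*} {G : SimpleGraph V} {S : V → Type*} [∀ v, Monoid (S v)]

theorem orth_of_freshPathSegment {W : Finset V} {zs : List V} {d : V}
    [IsDedekindFiniteMonoid (S d)] (hseg : Gᶜ.FreshPathSegment W zs d)
    {P : List (Σ v, S v)} (hP : ∀ l ∈ P, l.1 ∈ W) {c : S d} (hc : ¬IsUnit c)
    (r : GraphProduct G S) {a : ∀ v, S v} (ha : ∀ v, a v ≠ 1) (had : ¬IsUnit (a d)) :
    Orth (wordProd G P * of c * r) (wordProd G (zs.map fun v => ⟨v, a v⟩)) := by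
  classical
  obtain ⟨pre, u, p, post, rfl, huW, hupre, hdpre, hnd, hch⟩ := hseg
  let R : Relay G := .ofPath _ hch d
  have : IsDedekindFiniteMonoid (S R.anchor) := ‹IsDedekindFiniteMonoid (S d)›
  exact orth_of_forall_mem_of_forall_notMem R.toEnd (Q := {σ | σ u = 1})
    (R.toEnd_apply_eq_one (fun l hl hlu => huW (by rw [← hlu]; exact hP l hl)) hc r)
    (R.toEnd_apply_ne_one a hupre hdpre hnd (List.isChain_nextAfter hnd) (fun v _ => ha v) had)

theorem exists_forall_orth [Infinite V] (hG : Gᶜ.Preconnected) [∀ v, Nontrivial (S v)]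
    [∀ v, IsDedekindFiniteMonoid (S v)] (F : Finset (GraphProduct G S))
    (hF : ∀ f ∈ F, ¬IsUnit f) : ∃ g : GraphProduct G S, ∀ f ∈ F, Orth f g := by
  classical
  choose! P d c r hc hfeq using fun f hf => exists_eq_wordProd_mul_of_not_isUnit (hF f hf)
  choose a ha1 hau using fun v => exists_ne_one_and_not_isUnit (M := S v)
  set W := F.image d ∪ F.biUnion fun f => ((P f).map Sigma.fst).toFinset
  obtain ⟨zs, hzs⟩ := hG.exists_freshPathSegment (F.image d) W Finset.subset_union_left
  refine ⟨wordProd G (zs.map fun v => ⟨v, a v⟩), fun f hf => ?_⟩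
  have hPW : ∀ l ∈ P f, l.1 ∈ W := fun l hl => Finset.mem_union_right _ <|
    Finset.mem_biUnion.2 ⟨f, hf, List.mem_toFinset.2 (List.mem_map_of_mem hl)⟩
  rw [hfeq f hf]
  exact orth_of_freshPathSegment (hzs (d f) (Finset.mem_image_of_mem d hf)) hPW (hc f hf) (r f)
    ha1 (hau _ ⟨c f, hc f hf⟩)

theorem exists_isUnit_mem_of_isFoundationSet [Infinite V] (hG : Gᶜ.Preconnected)
    [∀ v, Nontrivial (S v)] [∀ v, IsDedekindFiniteMonoid (S v)] {F : Set (GraphProduct G S)}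
    (hF : IsFoundationSet F) : ∃ f ∈ F, IsUnit f := by
  by_contra! hF'
  obtain ⟨g, hg⟩ := exists_forall_orth hG hF.1.toFinset fun f hf => hF' f (hF.1.mem_toFinset.1 hf)
  obtain ⟨f, hf, hfg⟩ := hF.2 g
  exact hfg (hg f (hF.1.mem_toFinset.2 hf))

end GraphProduct

theorem foundation_sets_infinite_coconnected_general {V : Type*} [Infinite V]
    (G : SimpleGraph V) (hcc : Gᶜ.Connected)
    (S : V → Type*) [∀ v, Monoid (S v)] [∀ v, Nontrivial (S v)]
    (hlc : ∀ v, LeftCancellative (S v)) :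
    (∀ F : Set (GraphProduct G S), IsFoundationSet F → ∃ f ∈ F, IsUnit f) ∧
    HasAR (GraphProduct G S) := by
  have : ∀ v, IsDedekindFiniteMonoid (S v) := fun v =>
    have : IsLeftCancelMul (S v) := ⟨hlc v⟩
    inferInstance
  have hunit (F : Set (GraphProduct G S)) (hF : IsFoundationSet F) : ∃ f ∈ F, IsUnit f :=
    GraphProduct.exists_isUnit_mem_of_isFoundationSet hcc.preconnected hF
  exact ⟨hunit, hasAR_of_forall_exists_isUnit hunit⟩

/-- Theorem 4.3(i): for an infinite coconnected graph, every foundation set for the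
graph product contains an invertible element; in particular the graph product has
property (AR). -/
theorem foundation_sets_infinite_coconnected {V : Type*} [Countable V] [Infinite V]
    (G : SimpleGraph V) (hcc : Gᶜ.Connected)
    (S : V → Type*) [∀ v, Monoid (S v)] [∀ v, Nontrivial (S v)]
    (hlc : ∀ v, LeftCancellative (S v)) (hlcm : ∀ v, IsRightLCM (S v)) :
    (∀ F : Set (GraphProduct G S), IsFoundationSet F → ∃ f ∈ F, IsUnit f) ∧
    HasAR (GraphProduct G S) :=
  foundation_sets_infinite_coconnected_general G hcc S hlc
end
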